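/- The coefficients μ^{(1)}_n satisfy: μ^{(1)}_0 = 1 and, for every n ≥ 1, (Qq)^{−1}·[ν+1]_q·[ν+n+1]_q·μ^{(1)}_n = ∑_{k=0}^{n−1} q^{k} μ^{(1)}_{k} μ^{(1)}_{n−1−k} in K. -/

import Mathlib

/- Let `K` be the fraction field of `ℚ[q,Q]`, where `Q` plays the role of `q^ν`.
`θ1ν` and `θ1ν1` are the series `θ^{(1)}_ν` and `θ^{(1)}_{ν+1}` of Jackson's
`q`-Bessel function `J^{(1)}_ν`, and `μ1 n` are the coefficients of
`θ^{(1)}_{ν+1}/θ^{(1)}_ν`. -/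

noncomputable section

abbrev K : Type := FractionRing (MvPolynomial (Fin 2) ℚ)

def qv : K := algebraMap (MvPolynomial (Fin 2) ℚ) K (MvPolynomial.X 0)

def Qv : K := algebraMap (MvPolynomial (Fin 2) ℚ) K (MvPolynomial.X 1)

/-- The q-Pochhammer symbol `(a;q)_n`. -/
def qPoch (a : K) (n : ℕ) : K := ∏ j ∈ Finset.range n, (1 - a * qv ^ j)

/-- `[ν+k]_q = (1 - Q q^k)/(1-q)`. -/
def brk (k : ℕ) : K := (1 - Qv * qv ^ k) / (1 - qv)

/-- `[ν]_q = (1 - Q)/(1-q)`. -/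
def brNu : K := (1 - Qv) / (1 - qv)

/-- `θ^{(1)}_ν(x)`. -/
def θ1ν : PowerSeries K :=
  PowerSeries.mk fun n =>
    (-1) ^ n * (1 - qv) ^ (2 * n) / (qPoch qv n * qPoch (Qv * qv) n)

/-- `θ^{(1)}_{ν+1}(x)`. -/
def θ1ν1 : PowerSeries K :=
  PowerSeries.mk fun n =>
    (-1) ^ n * (1 - qv) ^ (2 * n) / (qPoch qv n * qPoch (Qv * qv ^ 2) n)

/-- The coefficients `μ^{(1)}_n` of `θ^{(1)}_{ν+1}(x)/θ^{(1)}_ν(x)`. -/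
def μ1 (n : ℕ) : K := PowerSeries.coeff (R := K) n (θ1ν1 * θ1ν⁻¹)

/-!
Write `v = θ^{(1)}_ν`, `u = θ^{(1)}_{ν+1}` and `g = u / v`. Comparing coefficients gives the two
contiguous relations `v(x) - v(qx) = -(1-q)²/(1-Qq) · x u(x)` and `u(x) - Qq u(qx) = (1-Qq) v(x)`.
Since `v(qx) / v(x) = 1 + (1-q)²/(1-Qq) · x g(x)` by the first, dividing the second by `v` turns
it into the `q`-Riccati equation `g(x) - Qq g(qx) = (1-Qq) + Qq (1-q)²/(1-Qq) · x g(x) g(qx)`, whose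
coefficient of `x^n` is the recurrence.
-/

open PowerSeries

section Riccati

variable {R : Type*} [CommRing R]

theorem PowerSeries.riccati_of_contiguous [IsDomain R] {u v g : R⟦X⟧} {q a b c : R}
    (hv : v ≠ 0) (hg : g * v = u) (hv_sub : v - rescale q v = C c * X * u)
    (hu_sub : u - C a * rescale q u = C b * v) :
    g - C a * rescale q g = C b - C (a * c) * X * (g * rescale q g) := by
  have hgq : rescale q g * rescale q v = rescale q u := by rw [← map_mul, hg]
  apply mul_right_cancel₀ hv
  rw [map_mul]
  linear_combination (1 + C a * C c * X * rescale q g) * hg - C a * rescale q g * hv_sub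
    - C a * hgq + hu_sub

theorem PowerSeries.coeff_succ_of_riccati {g : R⟦X⟧} {q a b d : R}
    (h : g - C a * rescale q g = C b - C d * X * (g * rescale q g)) (n : ℕ) :
    (1 - a * q ^ (n + 1)) * coeff (n + 1) g
      = -d * ∑ k ∈ Finset.range (n + 1), q ^ k * coeff k g * coeff (n - k) g := by
  have hcoeff := congrArg (coeff (n + 1)) h
  rw [map_sub, map_sub, coeff_C_mul, coeff_C, if_neg n.succ_ne_zero, mul_comm g, mul_assoc,
    coeff_C_mul, coeff_succ_X_mul, coeff_mul,
    Finset.Nat.sum_antidiagonal_eq_sum_range_succ_mk] at hcoeff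
  simp only [coeff_rescale] at hcoeff
  linear_combination hcoeff

end Riccati

theorem one_sub_algebraMap_ne_zero {p : MvPolynomial (Fin 2) ℚ}
    (hp : MvPolynomial.constantCoeff p = 0) : (1 : K) - algebraMap _ K p ≠ 0 := by
  rw [← map_one (algebraMap (MvPolynomial (Fin 2) ℚ) K), ← map_sub]
  refine (map_ne_zero_iff _ (IsFractionRing.injective _ K)).mpr fun h => ?_
  simpa [hp] using congrArg MvPolynomial.constantCoeff h

theorem one_sub_Qv_mul_qv_pow_ne_zero (k : ℕ) : 1 - Qv * qv ^ k ≠ 0 := by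
  have := one_sub_algebraMap_ne_zero (p := MvPolynomial.X 1 * MvPolynomial.X 0 ^ k) (by simp)
  rwa [map_mul, map_pow] at this

theorem one_sub_qv_pow_succ_ne_zero (k : ℕ) : 1 - qv ^ (k + 1) ≠ 0 := by
  have := one_sub_algebraMap_ne_zero (p := MvPolynomial.X 0 ^ (k + 1)) (by simp)
  rwa [map_pow] at this

theorem qv_ne_zero : qv ≠ 0 :=
  (map_ne_zero_iff _ (IsFractionRing.injective _ K)).mpr (MvPolynomial.X_ne_zero 0)

theorem Qv_ne_zero : Qv ≠ 0 :=
  (map_ne_zero_iff _ (IsFractionRing.injective _ K)).mpr (MvPolynomial.X_ne_zero 1)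

theorem qPoch_ne_zero {a : K} (ha : ∀ j, 1 - a * qv ^ j ≠ 0) (n : ℕ) : qPoch a n ≠ 0 :=
  Finset.prod_ne_zero_iff.mpr fun j _ => ha j

theorem qPoch_qv_ne_zero (n : ℕ) : qPoch qv n ≠ 0 :=
  qPoch_ne_zero (fun j => by rw [← pow_succ']; exact one_sub_qv_pow_succ_ne_zero j) n

theorem qPoch_Qv_mul_qv_pow_ne_zero (i n : ℕ) : qPoch (Qv * qv ^ i) n ≠ 0 :=
  qPoch_ne_zero (fun j => by rw [mul_assoc, ← pow_add]; exact one_sub_Qv_mul_qv_pow_ne_zero _) n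

theorem qPoch_succ (a : K) (n : ℕ) : qPoch a (n + 1) = qPoch a n * (1 - a * qv ^ n) :=
  Finset.prod_range_succ _ _

theorem qPoch_succ' (a : K) (n : ℕ) : qPoch a (n + 1) = (1 - a) * qPoch (a * qv) n := by
  rw [qPoch, Finset.prod_range_succ', mul_comm, pow_zero, mul_one]
  exact congrArg _ (Finset.prod_congr rfl fun j _ => by ring)

theorem qPoch_Qv_mul_qv_succ (n : ℕ) :
    qPoch (Qv * qv) (n + 1) = (1 - Qv * qv) * qPoch (Qv * qv ^ 2) n := by
  rw [qPoch_succ', mul_assoc, ← pow_two]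

theorem constantCoeff_θ1ν : constantCoeff θ1ν = 1 := by
  simp [θ1ν, qPoch, ← coeff_zero_eq_constantCoeff_apply]

theorem constantCoeff_θ1ν1 : constantCoeff θ1ν1 = 1 := by
  simp [θ1ν1, qPoch, ← coeff_zero_eq_constantCoeff_apply]

theorem θ1ν_sub_rescale :
    θ1ν - rescale qv θ1ν = C (-(1 - qv) ^ 2 / (1 - Qv * qv)) * X * θ1ν1 := by
  ext (_ | m)
  · rw [map_sub, coeff_rescale, mul_assoc, coeff_C_mul, coeff_zero_X_mul, pow_zero, one_mul,
      sub_self, mul_zero]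
  · rw [mul_assoc, coeff_C_mul, coeff_succ_X_mul, map_sub, coeff_rescale]
    simp only [θ1ν, θ1ν1, coeff_mk]
    rw [qPoch_succ qv m, ← pow_succ', qPoch_Qv_mul_qv_succ]
    have := one_sub_Qv_mul_qv_pow_ne_zero 1
    have := one_sub_qv_pow_succ_ne_zero m
    have := qPoch_qv_ne_zero m
    have := qPoch_Qv_mul_qv_pow_ne_zero 2 m
    rw [pow_one] at *
    field_simp
    ring

theorem θ1ν1_sub_rescale :
    θ1ν1 - C (Qv * qv) * rescale qv θ1ν1 = C (1 - Qv * qv) * θ1ν := by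
  ext n
  rw [map_sub, coeff_C_mul, coeff_C_mul, coeff_rescale]
  simp only [θ1ν, θ1ν1, coeff_mk]
  have hpoch : qPoch (Qv * qv) n * (1 - Qv * qv ^ (n + 1))
      = (1 - Qv * qv) * qPoch (Qv * qv ^ 2) n := by
    rw [← qPoch_Qv_mul_qv_succ, qPoch_succ, mul_assoc, ← pow_succ']
  have := qPoch_qv_ne_zero n
  have := qPoch_Qv_mul_qv_pow_ne_zero 1 n
  have := qPoch_Qv_mul_qv_pow_ne_zero 2 n
  rw [pow_one] at *
  -- keeps `field_simp` from normalising the arguments of `qPoch` apart from those in `hpoch`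
  generalize qPoch qv n = P at *
  generalize qPoch (Qv * qv) n = A at *
  generalize qPoch (Qv * qv ^ 2) n = B at *
  field_simp
  linear_combination (1 - qv) ^ (2 * n) * hpoch

/-- Proposition 3.3: the recurrence for the coefficients `μ^{(1)}_n`. -/
theorem mu1_recurrence :
    μ1 0 = 1 ∧
      ∀ n : ℕ, 1 ≤ n →
        (Qv * qv)⁻¹ * brk 1 * brk (n + 1) * μ1 n
          = ∑ k ∈ Finset.range n, qv ^ k * μ1 k * μ1 (n - 1 - k) := by
  have hv : constantCoeff θ1ν ≠ 0 := by simp [constantCoeff_θ1ν]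
  have hg : θ1ν1 * θ1ν⁻¹ * θ1ν = θ1ν1 := by
    rw [mul_assoc, PowerSeries.inv_mul_cancel _ hv, mul_one]
  have hriccati := riccati_of_contiguous (fun h => hv (by simp [h])) hg
    θ1ν_sub_rescale θ1ν1_sub_rescale
  refine ⟨?_, fun n hn => ?_⟩
  · rw [μ1, coeff_zero_eq_constantCoeff_apply, map_mul, constantCoeff_inv, constantCoeff_θ1ν,
      constantCoeff_θ1ν1, inv_one, mul_one]
  obtain ⟨m, rfl⟩ : ∃ m, n = m + 1 := ⟨n - 1, by omega⟩
  have hcoeff := coeff_succ_of_riccati hriccati m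
  simp only [Nat.add_sub_cancel]
  have := Qv_ne_zero
  have := qv_ne_zero
  have : 1 - Qv * qv ≠ 0 := by simpa using one_sub_Qv_mul_qv_pow_ne_zero 1
  have : 1 - qv ≠ 0 := by simpa using one_sub_qv_pow_succ_ne_zero 0
  rw [brk, brk, pow_one]
  simp only [μ1] at *
  field_simp at hcoeff ⊢
  linear_combination hcoeff

end
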